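/- arXiv:1912.01656 — 2 statements merged into one kernel-verified Lean document; each statement's English description precedes it below -/
import Mathlib

section
/- Let p be a prime, m ≥ 2, and suppose 1 ≤ ℓ < (p−2)p^{m-1} with ord_p(ℓ) < m−1. Then the p-adic valuation of a_ℓ = Σ_{k=⌈ℓ/p^{m-1}⌉}^{p-1} C(k p^{m-1}, ℓ) is at least 2. -/
/-!
Put `q = p ^ (m - 1)`. Since `ord_p ℓ < m - 1` we have `ℓ = q s + r` with `0 < r < q`, and the
sum may be taken over all `k < p`. The absorption identity `ℓ C(kq, ℓ) = kq C(kq - 1, ℓ - 1)` gives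
`ℓ a_ℓ = q ∑_k k C(kq - 1, ℓ - 1)`, and Lucas' theorem in base `q` reduces the last sum mod `p` to
`C(q - 1, r - 1) ∑_{k<p} k C(k - 1, s) = C(q - 1, r - 1) (s + 1) C(p, s + 2)`, a multiple of `p`
because `s + 2 < p`. Hence `p q ∣ ℓ a_ℓ`, and as `p ^ (ord_p ℓ + 1)` divides `q`, `p ^ 2 ∣ a_ℓ`.
-/

open Finset

namespace Choose

variable {p : ℕ} [Fact p.Prime]

theorem choose_modEq_choose_mod_pow_mul_choose_div_pow_nat (a : ℕ) {n k : ℕ} :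
    n.choose k ≡ (n % p ^ a).choose (k % p ^ a) * (n / p ^ a).choose (k / p ^ a) [MOD p] := by
  induction a generalizing n k with
  | zero => simp only [pow_zero, Nat.mod_one, Nat.div_one, Nat.choose_self, one_mul]; rfl
  | succ a ih =>
    have low := choose_modEq_choose_mod_mul_choose_div_nat (p := p) (n := n % p ^ (a + 1))
      (k := k % p ^ (a + 1))
    rw [pow_succ', Nat.mod_mul_right_mod, Nat.mod_mul_right_mod, Nat.mod_mul_right_div_self,
      Nat.mod_mul_right_div_self] at low
    calc n.choose k ≡ (n % p).choose (k % p) * (n / p).choose (k / p) [MOD p] :=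
          choose_modEq_choose_mod_mul_choose_div_nat
      _ ≡ (n % p).choose (k % p) * ((n / p % p ^ a).choose (k / p % p ^ a) *
            (n / p / p ^ a).choose (k / p / p ^ a)) [MOD p] := ih.mul_left _
      _ ≡ _ [MOD p] := by
        rw [← mul_assoc, pow_succ', ← Nat.div_div_eq_div_mul, ← Nat.div_div_eq_div_mul]
        exact low.symm.mul_right _

theorem choose_pow_mul_add_pow_mul_add_modEq_nat {a b c d t : ℕ} (hb : b < p ^ a)
    (hd : d < p ^ a) :
    (p ^ a * c + b).choose (p ^ a * t + d) ≡ b.choose d * c.choose t [MOD p] := by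
  have hpa : 0 < p ^ a := pow_pos (Fact.out : p.Prime).pos a
  simpa [Nat.mul_add_mod, Nat.mod_eq_of_lt, Nat.mul_add_div hpa, Nat.div_eq_of_lt, hb, hd] using
    choose_modEq_choose_mod_pow_mul_choose_div_pow_nat (p := p) a
      (n := p ^ a * c + b) (k := p ^ a * t + d)

end Choose

theorem Nat.mul_choose_eq_mul_choose_sub_one (n : ℕ) {k : ℕ} (hk : k ≠ 0) :
    k * n.choose k = n * (n - 1).choose (k - 1) := by
  obtain ⟨j, rfl⟩ := Nat.exists_eq_succ_of_ne_zero hk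
  rcases n with _ | n
  · simp
  · simpa [mul_comm] using (Nat.add_one_mul_choose_eq n j).symm

theorem Nat.sum_range_mul_choose_sub_one (n s : ℕ) :
    ∑ k ∈ range n, k * (k - 1).choose s = (s + 1) * n.choose (s + 2) := by
  induction n with
  | zero => simp
  | succ n ih =>
    have absorb := Nat.mul_choose_eq_mul_choose_sub_one n (Nat.succ_ne_zero s)
    simp only [Nat.succ_eq_add_one, Nat.add_sub_cancel] at absorb
    rw [sum_range_succ, ih, ← absorb, Nat.choose_succ_succ' n (s + 1)]
    ring

theorem Nat.sum_Icc_ceilDiv_choose_mul_eq_sum_range {q : ℕ} (hq : 0 < q) (ℓ N : ℕ) :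
    ∑ k ∈ Icc (ℓ ⌈/⌉ q) N, (k * q).choose ℓ = ∑ k ∈ range (N + 1), (k * q).choose ℓ := by
  refine sum_subset (fun k hk => ?_) fun k hkN hk => Nat.choose_eq_zero_of_lt ?_
  · simp only [mem_Icc, mem_range] at hk ⊢
    omega
  · have hk' : k < ℓ ⌈/⌉ q := by
      simp only [mem_Icc, mem_range] at hk hkN
      omega
    rw [mul_comm]
    exact lt_of_not_ge fun h => hk'.not_ge ((ceilDiv_le_iff_le_mul hq).mpr h)

theorem pow_dvd_of_pow_add_padicValNat_dvd_mul {p : ℕ} [Fact p.Prime] {ℓ a n : ℕ} (hℓ : ℓ ≠ 0)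
    (h : p ^ (padicValNat p ℓ + n) ∣ ℓ * a) : p ^ n ∣ a := by
  rcases eq_or_ne a 0 with rfl | ha
  · exact dvd_zero _
  rw [padicValNat_dvd_iff_le (mul_ne_zero hℓ ha), padicValNat.mul hℓ ha] at h
  exact (padicValNat_dvd_iff_le ha).mpr (by omega)

theorem pow_succ_dvd_mul_sum_range_choose_mul_pow {p e ℓ : ℕ} (hp : p.Prime) (hℓ : ¬p ^ e ∣ ℓ)
    (hs : ℓ / p ^ e + 2 < p) : p ^ (e + 1) ∣ ℓ * ∑ k ∈ range p, (k * p ^ e).choose ℓ := by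
  have := Fact.mk hp
  set q := p ^ e
  set s := ℓ / q
  set r := ℓ % q
  have hq : 0 < q := pow_pos hp.pos e
  have hr : r ≠ 0 := fun h => hℓ (Nat.dvd_of_mod_eq_zero h)
  have hrq : r < q := Nat.mod_lt ℓ hq
  have hℓs : ℓ = q * s + r := (Nat.div_add_mod ℓ q).symm
  clear_value s r
  have absorb : ℓ * ∑ k ∈ range p, (k * q).choose ℓ =
      q * ∑ k ∈ range p, k * (k * q - 1).choose (ℓ - 1) := by
    simp only [mul_sum]
    refine sum_congr rfl fun k _ => ?_
    rw [Nat.mul_choose_eq_mul_choose_sub_one _ (by omega)]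
    ring
  -- Lucas in base `q`: `k q - 1 = q (k - 1) + (q - 1)` and `ℓ - 1 = q s + (r - 1)`.
  have lucas : ∑ k ∈ range p, k * (k * q - 1).choose (ℓ - 1) ≡
      ∑ k ∈ range p, k * ((q - 1).choose (r - 1) * (k - 1).choose s) [MOD p] := by
    refine Nat.ModEq.sum fun k _ => ?_
    rcases k with _ | j
    · simp only [zero_mul, Nat.ModEq.refl]
    · have hn : (j + 1) * q - 1 = q * j + (q - 1) := by rw [add_one_mul, mul_comm]; omega
      have hk : ℓ - 1 = q * s + (r - 1) := by omega
      rw [hn, hk, Nat.add_sub_cancel]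
      exact (Choose.choose_pow_mul_add_pow_mul_add_modEq_nat (by omega) (by omega)).mul_left _
  have hdvd : p ∣ ∑ k ∈ range p, k * ((q - 1).choose (r - 1) * (k - 1).choose s) := by
    simp_rw [mul_left_comm _ ((q - 1).choose (r - 1))]
    rw [← mul_sum, Nat.sum_range_mul_choose_sub_one]
    exact dvd_mul_of_dvd_right (dvd_mul_of_dvd_right (hp.dvd_choose_self (by omega) hs) _) _
  rw [absorb, pow_succ]
  exact mul_dvd_mul_left q
    (Nat.modEq_zero_iff_dvd.mp (lucas.trans (Nat.modEq_zero_iff_dvd.mpr hdvd)))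

theorem stmt2_general (p m : ℕ) (hp : p.Prime) (ℓ : ℕ)
    (h1 : 1 ≤ ℓ) (h2 : ℓ < (p - 2) * p ^ (m - 1))
    (hord : (padicValNat p ℓ : ℤ) < (m : ℤ) - 1) :
    p ^ 2 ∣ ∑ k ∈ Finset.Icc (ℓ ⌈/⌉ p ^ (m - 1)) (p - 1), (k * p ^ (m - 1)).choose ℓ := by
  have := Fact.mk hp
  have hv : padicValNat p ℓ + 2 ≤ m - 1 + 1 := by omega
  have hq : 0 < p ^ (m - 1) := pow_pos hp.pos _
  have hndvd : ¬p ^ (m - 1) ∣ ℓ := fun h => by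
    have := (padicValNat_dvd_iff_le (by omega)).mp h
    omega
  have hs : ℓ / p ^ (m - 1) + 2 < p :=
    Nat.add_lt_of_lt_sub (Nat.div_lt_of_lt_mul (by rwa [mul_comm] at h2))
  rw [Nat.sum_Icc_ceilDiv_choose_mul_eq_sum_range hq, Nat.sub_add_cancel hp.one_le]
  refine pow_dvd_of_pow_add_padicValNat_dvd_mul (Nat.one_le_iff_ne_zero.mp h1) ?_
  exact (pow_dvd_pow p hv).trans (pow_succ_dvd_mul_sum_range_choose_mul_pow hp hndvd hs)

/-- For a prime `p`, `m ≥ 2`, `1 ≤ ℓ < (p-2) p^{m-1}` with `ord_p(ℓ) < m - 1`,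
the `p`-adic valuation of `a_ℓ = Σ_{k=⌈ℓ/p^{m-1}⌉}^{p-1} C(k p^{m-1}, ℓ)` is at least 2. -/
theorem stmt2 (p m : ℕ) (hp : p.Prime) (hm : 2 ≤ m) (ℓ : ℕ)
    (h1 : 1 ≤ ℓ) (h2 : ℓ < (p - 2) * p ^ (m - 1))
    (hord : (padicValNat p ℓ : ℤ) < (m : ℤ) - 1) :
    p ^ 2 ∣ ∑ k ∈ Finset.Icc (ℓ ⌈/⌉ p ^ (m - 1)) (p - 1), (k * p ^ (m - 1)).choose ℓ :=
  stmt2_general p m hp ℓ h1 h2 hord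
end

section
/- Let p be an odd prime, m ≥ 2, and d−1 = (p−2)p^{m-1} + p^{m-2}. Then C((p−1)p^{m-1}, d−1) ≡ −p mod p^2 ℤ_p. -/
/-!
Modulo `p²` one has `C(pa, pb) ≡ C(a, b)` (in Vandermonde's convolution for `C(pa + p, pb + p)`
the terms other than `C(pa, pb + p)` and `C(pa, pb)` are products of two multiples of `p`).
Iterating this, the coefficient reduces to `C(p (p - 1), p (p - 2) + 1) = p y`, say (it is a
multiple of `p` by Lucas). Cancelling `p` in `(n + 1) C(n, k) = C(n + 1, k + 1) (k + 1)` for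
`n + 1 = p (p - 1)`, `k = p (p - 2)` and applying Lucas's theorem to `C(n, k)` gives
`y ≡ p - 1 ≡ -1` modulo `p`.
-/

open Nat

namespace Choose

variable {p : ℕ} [hp : Fact p.Prime]

theorem prime_dvd_choose_mul_of_not_dvd (a : ℕ) {c : ℕ} (hc : ¬ p ∣ c) :
    p ∣ choose (p * a) c := by
  have lucas := choose_modEq_choose_mod_mul_choose_div_nat (n := p * a) (k := c) (p := p)
  rw [Nat.mul_mod_right, choose_eq_zero_of_lt (Nat.pos_of_ne_zero (mt Nat.dvd_of_mod_eq_zero hc)),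
    zero_mul] at lucas
  exact Nat.modEq_zero_iff_dvd.mp lucas

theorem choose_mul_add_self_mul_add_self (a b : ℕ) :
    choose (p * a + p) (p * b + p) ≡
      choose (p * a) (p * b + p) + choose (p * a) (p * b) [ZMOD p ^ 2] := by
  have hp0 := hp.out.pos
  rw [← Nat.cast_pow, ← ZMod.intCast_eq_intCast_iff]
  push_cast
  rw [add_choose_eq, Nat.cast_sum,
    Finset.sum_eq_add_of_mem (p * b + p, 0) (p * b, p) (by simp) (by simp) (by simp; omega)]
  · simp
  rintro ⟨i, j⟩ hij ⟨h0, hpb⟩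
  rw [Finset.HasAntidiagonal.mem_antidiagonal] at hij
  simp only [ne_eq, Prod.mk.injEq, not_and] at h0 hpb
  rcases lt_or_ge p j with hj | hj
  · simp [choose_eq_zero_of_lt hj]
  have hj0 : j ≠ 0 := fun h => h0 (by omega) h
  have hjp : j < p := lt_of_le_of_ne hj (fun h => hpb (by omega) h)
  have hi : ¬ p ∣ i := fun hi => by
    have : p ∣ j := (Nat.dvd_add_right hi).mp (hij ▸ ⟨b + 1, by ring⟩)
    exact absurd (Nat.le_of_dvd (Nat.pos_of_ne_zero hj0) this) (by omega)
  rw [ZMod.natCast_eq_zero_iff, sq]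
  exact mul_dvd_mul (prime_dvd_choose_mul_of_not_dvd a hi) (hp.out.dvd_choose_self hj0 hjp)

theorem choose_mul_mul_modEq_choose_sq (a b : ℕ) :
    choose (p * a) (p * b) ≡ choose a b [ZMOD p ^ 2] := by
  induction a generalizing b with
  | zero =>
    cases b with
    | zero => simp [Int.ModEq.refl]
    | succ b => simp [choose_eq_zero_of_lt (Nat.mul_pos hp.out.pos b.succ_pos), Int.ModEq.refl]
  | succ a ih =>
    cases b with
    | zero => simp [Int.ModEq.refl]
    | succ b =>
      rw [Nat.mul_add_one, Nat.mul_add_one, choose_succ_succ', Nat.cast_add,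
        add_comm (a.choose b : ℤ)]
      exact (choose_mul_add_self_mul_add_self a b).trans ((ih (b + 1)).add (ih b))

theorem choose_pow_mul_pow_mul_modEq_choose_sq (k a b : ℕ) :
    choose (p ^ k * a) (p ^ k * b) ≡ choose a b [ZMOD p ^ 2] := by
  induction k with
  | zero => simp [Int.ModEq.refl]
  | succ k ih =>
    grw [Nat.pow_succ', mul_assoc, mul_assoc, choose_mul_mul_modEq_choose_sq, ih]

theorem choose_mul_mul_add_one_modEq (a b : ℕ) :
    choose (p * (a + 1)) (p * b + 1) ≡ p * (a + 1) * choose a b [ZMOD p ^ 2] := by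
  have hp0 := hp.out.pos
  set n := p * a + (p - 1)
  have hn : p * (a + 1) = n + 1 := by simp only [n]; rw [Nat.mul_add_one]; omega
  have lucas : (choose n (p * b) : ℤ) ≡ choose a b [ZMOD p] := by
    have h := choose_modEq_choose_mod_mul_choose_div (n := n) (k := p * b) (p := p)
    rwa [Nat.mul_mod_right, Nat.mul_div_cancel_left b hp0, Nat.mul_add_mod,
      Nat.mod_eq_of_lt (by omega), Nat.mul_add_div hp0, Nat.div_eq_of_lt (by omega), add_zero,
      choose_zero_right, Nat.cast_one, one_mul] at h
  obtain ⟨y, hy⟩ : p ∣ choose (p * (a + 1)) (p * b + 1) :=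
    prime_dvd_choose_mul_of_not_dvd _ fun h => hp.out.one_lt.ne' <|
      Nat.dvd_one.mp ((Nat.dvd_add_right (dvd_mul_right p b)).mp h)
  have key : ((a + 1) * choose n (p * b) : ℤ) = y * (p * b + 1) := by
    have h := add_one_mul_choose_eq n (p * b)
    rw [← hn, hy, mul_assoc, mul_assoc] at h
    exact_mod_cast Nat.eq_of_mul_eq_mul_left hp0 h
  have hy_mod : (y : ℤ) ≡ (a + 1) * choose a b [ZMOD p] :=
    calc (y : ℤ) ≡ y * (p * b + 1) [ZMOD p] := Int.modEq_iff_dvd.mpr ⟨y * b, by ring⟩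
      _ = (a + 1) * choose n (p * b) := key.symm
      _ ≡ (a + 1) * choose a b [ZMOD p] := lucas.mul_left _
  rw [hy, sq, Nat.cast_mul, mul_assoc]
  exact hy_mod.mul_left' (c := p)

end Choose

theorem stmt10_general (p m : ℕ) [hp : Fact p.Prime] (hm : 2 ≤ m) :
    ‖(((p - 1) * p ^ (m - 1)).choose ((p - 2) * p ^ (m - 1) + p ^ (m - 2)) : ℚ_[p])
        + p‖ ≤ (p : ℝ) ^ (-2 : ℤ) := by
  have hp2 := hp.out.two_le
  obtain ⟨k, rfl⟩ : ∃ k, m = k + 2 := ⟨m - 2, by omega⟩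
  set C := ((p - 1) * p ^ (k + 2 - 1)).choose ((p - 2) * p ^ (k + 2 - 1) + p ^ (k + 2 - 2))
  have hn : (p - 1) * p ^ (k + 2 - 1) = p ^ k * (p * (p - 2 + 1)) := by
    rw [show k + 2 - 1 = k + 1 by omega, show p - 2 + 1 = p - 1 by omega]; ring
  have hr : (p - 2) * p ^ (k + 2 - 1) + p ^ (k + 2 - 2) = p ^ k * (p * (p - 2) + 1) := by
    rw [show k + 2 - 1 = k + 1 by omega, show k + 2 - 2 = k by omega]; ring
  have hmod : (C : ℤ) ≡ -p [ZMOD p ^ 2] := by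
    rw [show C = _ from congrArg₂ choose hn hr]
    refine ((Choose.choose_pow_mul_pow_mul_modEq_choose_sq k _ _).trans
      (Choose.choose_mul_mul_add_one_modEq _ _)).trans ?_
    rw [choose_self, Nat.cast_one, mul_one, Nat.cast_sub hp2]
    exact Int.modEq_iff_dvd.mpr ⟨-1, by ring⟩
  have hdvd : (p : ℤ) ^ 2 ∣ C + p := by simpa using (hmod.add_right p).symm.dvd
  exact_mod_cast (Padic.norm_int_le_pow_iff_dvd (C + p) 2).mpr hdvd

/-- For an odd prime `p`, `m ≥ 2`, and `d - 1 = (p-2)p^{m-1} + p^{m-2}`: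
`C((p-1)p^{m-1}, d-1) ≡ -p mod p² ℤ_p`. -/
theorem stmt10 (p m : ℕ) [hp : Fact p.Prime] (hodd : Odd p) (hm : 2 ≤ m) :
    ‖(((p - 1) * p ^ (m - 1)).choose ((p - 2) * p ^ (m - 1) + p ^ (m - 2)) : ℚ_[p])
        + p‖ ≤ (p : ℝ) ^ (-2 : ℤ) :=
  stmt10_general p m (hp := hp) hm
end
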